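/- Let η₀, η₁ ∈ [0,1] with η₀ > η₁ (expansion regime ordering: eigenvalue range [−L, L]), set b = h/(2(η₀ − η₁)), c̄ = 3 L η₀ h²/(η₀ − η₁), M = [[1, b],[b, 2b²]] ⊗ I_d, and assume L h² ≤ (η₀ − η₁)². Let H ∈ ℝ^{d×d} be symmetric with all eigenvalues in [−L, L]. Then for all (q̃, p̃) ∈ ℝ^{2d}, ‖ diag(I_d, η₁ I_d) · [[I − (h²/4)H, (h/2)I],[−(h/2)H, I]] · (q̃, p̃) ‖_M² ≤ (1 + c̄) ‖ diag(I_d, η₀ I_d) · (q̃, p̃) ‖_M². -/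

import Mathlib

/-!
Since `Msq b z w = ‖z + b • w‖² + ‖b • w‖²`, everything reduces to norms. Writing
`p' = p - (h/2) • H q` and `h = 2 b (η₀ - η₁)`, the image is `z = q + (h/2) • p'`, `w = η₁ • p'`,
so `z + b • w = q + b η₀ • p'`: the step differs from the input `(q, η₀ • p)` only by terms in
`u = b² (η₀ - η₁) • H q`, and `‖u‖ ≤ a ‖q‖` with `a = L b² (η₀ - η₁) ≤ 1/4` because `‖H‖ ≤ L`
for symmetric `H`. The triangle inequality together with `‖q‖ ≤ ‖q + b η₀ • p‖ + ‖b η₀ • p‖`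
then gives the factor `1 + 4 η₀ a (1 + η₀ a) ≤ 1 + 12 η₀ a = 1 + c̄`.
-/

open scoped RealInnerProductSpace

/-- Squared twisted norm `‖(z,w)‖_M²` for `M = [[1,b],[b,2b²]] ⊗ I_d`. -/
noncomputable def Msq {d : ℕ} (b : ℝ) (z w : EuclideanSpace ℝ (Fin d)) : ℝ :=
  ‖z‖ ^ 2 + 2 * b * ⟪z, w⟫ + 2 * b ^ 2 * ‖w‖ ^ 2

theorem ContinuousLinearMap.opNorm_le_of_abs_inner_self_le {E : Type*} [NormedAddCommGroup E]
    [InnerProductSpace ℝ E] {T : E →L[ℝ] E} (hT : T.IsSymmetric) {L : ℝ} (hL : 0 ≤ L)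
    (hbound : ∀ x, |⟪T x, x⟫| ≤ L * ‖x‖ ^ 2) : ‖T‖ ≤ L := by
  rw [T.norm_eq_iSup_rayleighQuotient hT]
  refine ciSup_le fun x => ?_
  rw [rayleighQuotient, reApplyInnerSelf_apply, RCLike.re_to_real, abs_div, abs_sq]
  rcases eq_or_ne x 0 with rfl | hx
  · simpa using hL
  · rw [div_le_iff₀ (by positivity)]
    exact hbound x

theorem Msq_eq_norm_add_smul_sq {d : ℕ} (b : ℝ) (z w : EuclideanSpace ℝ (Fin d)) :
    Msq b z w = ‖z + b • w‖ ^ 2 + ‖b • w‖ ^ 2 := by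
  rw [Msq, norm_add_sq_real, norm_smul, inner_smul_right, Real.norm_eq_abs, mul_pow, sq_abs]
  ring

theorem Msq_step_eq {d : ℕ} {h b η₀ η₁ : ℝ} (hh : h = 2 * b * (η₀ - η₁))
    (q p r : EuclideanSpace ℝ (Fin d)) :
    Msq b (q - (h ^ 2 / 4) • r + (h / 2) • p) (η₁ • (p - (h / 2) • r))
      = ‖q + η₀ • b • p - η₀ • (b ^ 2 * (η₀ - η₁)) • r‖ ^ 2
        + ‖η₁ • (b • p - (b ^ 2 * (η₀ - η₁)) • r)‖ ^ 2 := by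
  subst hh
  rw [Msq_eq_norm_add_smul_sq]
  congr 3 <;> module

theorem norm_sq_add_norm_sq_perturb_le {F : Type*} [SeminormedAddCommGroup F] [NormedSpace ℝ F]
    (q v u : F) {η₀ η₁ a : ℝ} (hη : |η₁| ≤ η₀) (ha : 0 ≤ a) (hu : ‖u‖ ≤ a * ‖q‖) :
    ‖q + η₀ • v - η₀ • u‖ ^ 2 + ‖η₁ • (v - u)‖ ^ 2
      ≤ (1 + 4 * (η₀ * a) * (1 + η₀ * a)) * (‖q + η₀ • v‖ ^ 2 + ‖η₀ • v‖ ^ 2) := by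
  have hη₀ : 0 ≤ η₀ := (abs_nonneg _).trans hη
  have hB : ‖η₀ • v‖ = η₀ * ‖v‖ := by rw [norm_smul, Real.norm_of_nonneg hη₀]
  have hq : ‖q‖ ≤ ‖q + η₀ • v‖ + ‖η₀ • v‖ := by simpa using norm_sub_le (q + η₀ • v) (η₀ • v)
  set A := ‖q + η₀ • v‖
  set B := ‖η₀ • v‖
  have hu' : η₀ * ‖u‖ ≤ η₀ * a * (A + B) := by
    rw [mul_assoc]; exact mul_le_mul_of_nonneg_left (hu.trans (by gcongr)) hη₀
  have h₁ : ‖q + η₀ • v - η₀ • u‖ ≤ A + η₀ * a * (A + B) := calc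
      ‖q + η₀ • v - η₀ • u‖ ≤ A + ‖η₀ • u‖ := norm_sub_le _ _
      _ = A + η₀ * ‖u‖ := by rw [norm_smul, Real.norm_of_nonneg hη₀]
      _ ≤ _ := by linarith
  have h₂ : ‖η₁ • (v - u)‖ ≤ B + η₀ * a * (A + B) := calc
      ‖η₁ • (v - u)‖ = |η₁| * ‖v - u‖ := by rw [norm_smul, Real.norm_eq_abs]
      _ ≤ η₀ * (‖v‖ + ‖u‖) := mul_le_mul hη (norm_sub_le v u) (norm_nonneg _) hη₀
      _ ≤ _ := by linarith
  have ht : 0 ≤ η₀ * a * (1 + η₀ * a) := by positivity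
  calc _ ≤ (A + η₀ * a * (A + B)) ^ 2 + (B + η₀ * a * (A + B)) ^ 2 := by gcongr
    _ ≤ _ := by nlinarith [mul_nonneg ht (sq_nonneg (A - B))]

theorem stmt9_general {d : ℕ} (L h η₀ η₁ : ℝ) (hL : 0 < L)
    (hη₀ : η₀ ∈ Set.Icc (0 : ℝ) 1) (hη₁ : η₁ ∈ Set.Icc (0 : ℝ) 1)
    (hgap : η₁ < η₀)
    (hLh : L * h ^ 2 ≤ (η₀ - η₁) ^ 2)
    -- `H` is symmetric with all eigenvalues in `[-L, L]`
    (H : EuclideanSpace ℝ (Fin d) →L[ℝ] EuclideanSpace ℝ (Fin d))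
    (hsymm : ∀ u v, ⟪H u, v⟫ = ⟪u, H v⟫)
    (hlow : ∀ u, -(L * ‖u‖ ^ 2) ≤ ⟪u, H u⟫)
    (hup : ∀ u, ⟪u, H u⟫ ≤ L * ‖u‖ ^ 2)
    (q p : EuclideanSpace ℝ (Fin d)) :
    Msq (h / (2 * (η₀ - η₁)))
        (q - (h ^ 2 / 4) • H q + (h / 2) • p)
        (η₁ • (p - (h / 2) • H q))
      ≤ (1 + 3 * L * η₀ * h ^ 2 / (η₀ - η₁)) *
          Msq (h / (2 * (η₀ - η₁))) q (η₀ • p) := by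
  have hE : 0 < η₀ - η₁ := sub_pos.mpr hgap
  set b := h / (2 * (η₀ - η₁)) with hb
  have hh : h = 2 * b * (η₀ - η₁) := by rw [hb]; field_simp
  have hLb : L * b ^ 2 ≤ 1 / 4 := by
    rw [hh] at hLh
    rw [← mul_le_mul_iff_left₀ (by positivity : 0 < 4 * (η₀ - η₁) ^ 2)]; linarith
  have hHq : ‖H q‖ ≤ L * ‖q‖ := H.le_of_opNorm_le (H.opNorm_le_of_abs_inner_self_le hsymm hL.le
    fun x => by rw [real_inner_comm]; exact abs_le.mpr ⟨hlow x, hup x⟩) q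
  set a := L * b ^ 2 * (η₀ - η₁)
  have hu : ‖(b ^ 2 * (η₀ - η₁)) • H q‖ ≤ a * ‖q‖ := by
    rw [norm_smul, Real.norm_of_nonneg (by positivity)]
    calc _ ≤ b ^ 2 * (η₀ - η₁) * (L * ‖q‖) := by gcongr
      _ = a * ‖q‖ := by ring
  have hη₀a : η₀ * a ≤ 1 / 4 := calc
    η₀ * a = L * b ^ 2 * (η₀ * (η₀ - η₁)) := by ring
    _ ≤ 1 / 4 * 1 :=
      mul_le_mul hLb (by nlinarith [hη₀.2, hη₁.1]) (by nlinarith [hη₀.1]) (by norm_num)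
    _ = 1 / 4 := by ring
  have hc : 3 * L * η₀ * h ^ 2 / (η₀ - η₁) = 12 * (η₀ * a) := by rw [hh]; field_simp; ring
  rw [Msq_step_eq hh, Msq_eq_norm_add_smul_sq, smul_comm b η₀ p, hc]
  refine (norm_sq_add_norm_sq_perturb_le q (b • p) _ (abs_le.mpr ⟨by linarith [hη₁.1], hgap.le⟩)
    (by positivity) hu).trans (mul_le_mul_of_nonneg_right ?_ (by positivity))
  nlinarith [mul_nonneg hη₀.1 (by positivity : 0 ≤ a)]

theorem stmt9 {d : ℕ} (L h η₀ η₁ : ℝ) (hL : 0 < L)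
    (hη₀ : η₀ ∈ Set.Icc (0 : ℝ) 1) (hη₁ : η₁ ∈ Set.Icc (0 : ℝ) 1)
    (hgap : η₁ < η₀)
    (hh : 0 < h) (hLh : L * h ^ 2 ≤ (η₀ - η₁) ^ 2)
    -- `H` is symmetric with all eigenvalues in `[-L, L]`
    (H : EuclideanSpace ℝ (Fin d) →L[ℝ] EuclideanSpace ℝ (Fin d))
    (hsymm : ∀ u v, ⟪H u, v⟫ = ⟪u, H v⟫)
    (hlow : ∀ u, -(L * ‖u‖ ^ 2) ≤ ⟪u, H u⟫)
    (hup : ∀ u, ⟪u, H u⟫ ≤ L * ‖u‖ ^ 2)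
    (q p : EuclideanSpace ℝ (Fin d)) :
    Msq (h / (2 * (η₀ - η₁)))
        (q - (h ^ 2 / 4) • H q + (h / 2) • p)
        (η₁ • (p - (h / 2) • H q))
      ≤ (1 + 3 * L * η₀ * h ^ 2 / (η₀ - η₁)) *
          Msq (h / (2 * (η₀ - η₁))) q (η₀ • p) :=
  stmt9_general L h η₀ η₁ hL hη₀ hη₁ hgap hLh H hsymm hlow hup q p
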